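/- arXiv:2407.06307 — 3 statements merged into one kernel-verified Lean document; each statement's English description precedes it below -/
import Mathlib

section
/- Let I : (0,1) → (0,1) be nondecreasing. Then the functional ρ(f) = ‖f‖_{m_I} = sup_{0<t<1} I(t) f^*(t) on M_+(0,1) is a rearrangement-invariant quasinorm — i.e., ρ(f) = 0 iff f = 0 a.e.; ρ(af) = a·ρ(f) for a ≥ 0; there exists C ≥ 1 with ρ(f+g) ≤ C·(ρ(f)+ρ(g)) for all f,g ∈ M_+(0,1); f ≤ g a.e. implies ρ(f) ≤ ρ(g); f_n ↑ f a.e. implies ρ(f_n) ↑ ρ(f); ρ(χ_{(0,1)}) < ∞; and ρ(f) = ρ(f^*) — if and only if I ∈ Δ₂. -/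
open MeasureTheory Set Filter
open scoped ENNReal

noncomputable section

/-- The nonincreasing rearrangement of `f` over `(0,1)`. -/
def rearr (f : ℝ → ℝ≥0∞) (t : ℝ) : ℝ≥0∞ :=
  sInf {l : ℝ≥0∞ | volume {s ∈ Set.Ioo (0:ℝ) 1 | l < f s} ≤ ENNReal.ofReal t}

/-- The maximal nonincreasing rearrangement `f^{**}(t) = (1/t) ∫_0^t f^*(s) ds`. -/
def dstar (f : ℝ → ℝ≥0∞) (t : ℝ) : ℝ≥0∞ :=
  (ENNReal.ofReal t)⁻¹ * ∫⁻ s in Set.Ioo (0:ℝ) t, rearr f s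

/-- The `L¹(0,1)` norm. -/
def lOne (f : ℝ → ℝ≥0∞) : ℝ≥0∞ := ∫⁻ t in Set.Ioo (0:ℝ) 1, f t

/-- The norm of the Marcinkiewicz-type space `m_I`. -/
def mNorm (I : ℝ → ℝ) (f : ℝ → ℝ≥0∞) : ℝ≥0∞ :=
  ⨆ t ∈ Set.Ioo (0:ℝ) 1, ENNReal.ofReal (I t) * rearr f t

/-- The norm of `m_Ĩ` where `Ĩ(t) = t / I(t)`. -/
def mNormTilde (I : ℝ → ℝ) (f : ℝ → ℝ≥0∞) : ℝ≥0∞ :=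
  ⨆ t ∈ Set.Ioo (0:ℝ) 1, ENNReal.ofReal (t / I t) * rearr f t

/-- The supremum operator `S_I f(t) = (1/I(t)) sup_{0<s≤t} I(s) f^*(s)`. -/
def SI (I : ℝ → ℝ) (f : ℝ → ℝ≥0∞) : ℝ → ℝ≥0∞ := fun t =>
  (ENNReal.ofReal (I t))⁻¹ * ⨆ s ∈ Set.Ioc (0:ℝ) t, ENNReal.ofReal (I s) * rearr f s

/-- The supremum operator `T_I f(t) = (I(t)/t) sup_{t≤s<1} (s/I(s)) f^*(s)`. -/
def TI (I : ℝ → ℝ) (f : ℝ → ℝ≥0∞) : ℝ → ℝ≥0∞ := fun t =>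
  ENNReal.ofReal (I t / t) * ⨆ s ∈ Set.Ico t 1, ENNReal.ofReal (s / I s) * rearr f s

/-- `H_I f(t) = ∫_t^1 f(s)/I(s) ds`. -/
def HI (I : ℝ → ℝ) (f : ℝ → ℝ≥0∞) : ℝ → ℝ≥0∞ := fun t =>
  ∫⁻ s in Set.Ioo t 1, f s / ENNReal.ofReal (I s)

/-- `R_I f(t) = (1/I(t)) ∫_0^t f(s) ds`. -/
def RI (I : ℝ → ℝ) (f : ℝ → ℝ≥0∞) : ℝ → ℝ≥0∞ := fun t =>
  (ENNReal.ofReal (I t))⁻¹ * ∫⁻ s in Set.Ioo (0:ℝ) t, f s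

/-- `I : (0,1) → (0,1)` is quasiconcave: a nondecreasing bijection of `(0,1)` onto `(0,1)`
with `I(t)/t` nonincreasing, `I(0+) = 0` and `I(1-) = 1`. -/
def Quasiconcave (I : ℝ → ℝ) : Prop :=
  Set.BijOn I (Set.Ioo 0 1) (Set.Ioo 0 1) ∧
  MonotoneOn I (Set.Ioo 0 1) ∧
  AntitoneOn (fun t => I t / t) (Set.Ioo 0 1) ∧
  Tendsto I (nhdsWithin 0 (Set.Ioo 0 1)) (nhds 0) ∧
  Tendsto I (nhdsWithin 1 (Set.Ioo 0 1)) (nhds 1)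

/-- Condition (★): `∫_0^t I(s)/s ds ≲ I(t)`. -/
def StarCond (I : ℝ → ℝ) : Prop :=
  ∃ C : ℝ, 0 < C ∧ ∀ t ∈ Set.Ioo (0:ℝ) 1,
    ∫⁻ s in Set.Ioo (0:ℝ) t, ENNReal.ofReal (I s / s) ≤ ENNReal.ofReal (C * I t)

/-- The average property: `∫_0^t ds/I(s) ≲ t/I(t)`. -/
def AvgProp (I : ℝ → ℝ) : Prop :=
  ∃ C : ℝ, 0 < C ∧ ∀ t ∈ Set.Ioo (0:ℝ) 1,
    ∫⁻ s in Set.Ioo (0:ℝ) t, ENNReal.ofReal (1 / I s) ≤ ENNReal.ofReal (C * (t / I t))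

/-- The condition `∫_t^1 I(s)/s² ds ≲ (1/t) ∫_0^t I(s)/s ds`. -/
def MaxCond (I : ℝ → ℝ) : Prop :=
  ∃ C : ℝ, 0 < C ∧ ∀ t ∈ Set.Ioo (0:ℝ) 1,
    ∫⁻ s in Set.Ioo t 1, ENNReal.ofReal (I s / s ^ 2) ≤
      ENNReal.ofReal (C / t) * ∫⁻ s in Set.Ioo (0:ℝ) t, ENNReal.ofReal (I s / s)

/-- The class `𝒬` of quasiconcave functions. -/
def ClassQ (I : ℝ → ℝ) : Prop :=
  Quasiconcave I ∧ StarCond I ∧ AvgProp I ∧ MaxCond I ∧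
  ∃ c d : ℝ,
    IsLUB {l : ℝ | 0 ≤ l ∧ ∀ t ∈ Set.Ioo (0:ℝ) 1,
      ENNReal.ofReal (l * (I t / t ^ 2 - 1)) ≤
        ∫⁻ s in Set.Ioo t 1, ENNReal.ofReal (I s / s ^ 3)} c ∧
    IsLeast {e : ℝ | 0 < e ∧ ∀ t ∈ Set.Ioo (0:ℝ) 1,
      ∫⁻ s in Set.Ioo t 1, ENNReal.ofReal (I s / s ^ 2) ≤
        ENNReal.ofReal (e * (I t / t))} d ∧
    (1 - c) * d ≤ c

/-- The `Δ₂` condition: `I(2t) ≤ C I(t)` for `t ∈ (0,1/2)`. -/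
def Delta2 (I : ℝ → ℝ) : Prop :=
  ∃ C : ℝ, 0 < C ∧ ∀ t ∈ Set.Ioo (0:ℝ) (1/2), I (2 * t) ≤ C * I t

/-- A rearrangement-invariant Banach function norm on `M₊(0,1)`. -/
def IsRiNorm (ρ : (ℝ → ℝ≥0∞) → ℝ≥0∞) : Prop :=
  (∀ f : ℝ → ℝ≥0∞, Measurable f →
      (ρ f = 0 ↔ f =ᵐ[volume.restrict (Set.Ioo (0:ℝ) 1)] 0)) ∧
  (∀ f : ℝ → ℝ≥0∞, Measurable f → ∀ a : ℝ, 0 ≤ a →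
      ρ (fun t => ENNReal.ofReal a * f t) = ENNReal.ofReal a * ρ f) ∧
  (∀ f g : ℝ → ℝ≥0∞, Measurable f → Measurable g →
      ρ (fun t => f t + g t) ≤ ρ f + ρ g) ∧
  (∀ f g : ℝ → ℝ≥0∞, Measurable f → Measurable g →
      (∀ᵐ t ∂(volume.restrict (Set.Ioo (0:ℝ) 1)), f t ≤ g t) → ρ f ≤ ρ g) ∧
  (∀ (fn : ℕ → ℝ → ℝ≥0∞) (f : ℝ → ℝ≥0∞), (∀ n, Measurable (fn n)) → Measurable f →
      (∀ᵐ t ∂(volume.restrict (Set.Ioo (0:ℝ) 1)), Monotone (fun n => fn n t)) →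
      (∀ᵐ t ∂(volume.restrict (Set.Ioo (0:ℝ) 1)), (⨆ n, fn n t) = f t) →
      (⨆ n, ρ (fn n)) = ρ f) ∧
  (ρ (fun _ => 1) < ⊤) ∧
  (∃ c : ℝ, 0 < c ∧ ∀ f : ℝ → ℝ≥0∞, Measurable f →
      ∫⁻ t in Set.Ioo (0:ℝ) 1, f t ≤ ENNReal.ofReal c * ρ f) ∧
  (∀ f : ℝ → ℝ≥0∞, Measurable f → ρ f = ρ (rearr f))

/-- The associate norm `ρ'`. -/
def assoc (ρ : (ℝ → ℝ≥0∞) → ℝ≥0∞) (f : ℝ → ℝ≥0∞) : ℝ≥0∞ :=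
  ⨆ (g : ℝ → ℝ≥0∞) (_ : Measurable g ∧ ρ g ≤ 1),
    ∫⁻ t in Set.Ioo (0:ℝ) 1, f t * g t

/-- The optimal target norm `‖f‖_{Y_X}` of the r.i. norm `ρ = ‖·‖_X` under `H_I`. -/
def optTargetNorm (I : ℝ → ℝ) (ρ : (ℝ → ℝ≥0∞) → ℝ≥0∞) (f : ℝ → ℝ≥0∞) : ℝ≥0∞ :=
  ⨆ (g : ℝ → ℝ≥0∞) (_ : Measurable g ∧ assoc ρ (RI I (rearr g)) ≤ 1),
    ∫⁻ t in Set.Ioo (0:ℝ) 1, rearr f t * rearr g t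

/-- The optimal domain norm `‖f‖_{X_Y} = sup_{h ∼ f} ‖H_I h‖_Y`. -/
def optDomainNorm (I : ℝ → ℝ) (ρY : (ℝ → ℝ≥0∞) → ℝ≥0∞) (f : ℝ → ℝ≥0∞) : ℝ≥0∞ :=
  ⨆ (h : ℝ → ℝ≥0∞)
    (_ : Measurable h ∧ ∀ t ∈ Set.Ioo (0:ℝ) 1, rearr h t = rearr f t),
      ρY (HI I h)

/-- `H_I : X → Y` boundedly. -/
def HIBounded (I : ℝ → ℝ) (ρX ρY : (ℝ → ℝ≥0∞) → ℝ≥0∞) : Prop :=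
  ∃ C : ℝ, 0 < C ∧ ∀ f : ℝ → ℝ≥0∞, Measurable f →
    ρY (HI I f) ≤ ENNReal.ofReal C * ρX f

/-- `X` is the optimal domain space for `Y` under `H_I`. -/
def IsOptimalDomain (I : ℝ → ℝ) (ρX ρY : (ℝ → ℝ≥0∞) → ℝ≥0∞) : Prop :=
  HIBounded I ρX ρY ∧
  ∀ ρZ : (ℝ → ℝ≥0∞) → ℝ≥0∞, IsRiNorm ρZ → HIBounded I ρZ ρY →
    ∃ C : ℝ, 0 < C ∧ ∀ f : ℝ → ℝ≥0∞, Measurable f →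
      ρX f ≤ ENNReal.ofReal C * ρZ f

/-- `Y` is the optimal target space for `X` under `H_I`. -/
def IsOptimalTarget (I : ℝ → ℝ) (ρX ρY : (ℝ → ℝ≥0∞) → ℝ≥0∞) : Prop :=
  HIBounded I ρX ρY ∧
  ∀ ρZ : (ℝ → ℝ≥0∞) → ℝ≥0∞, IsRiNorm ρZ → HIBounded I ρX ρZ →
    ∃ C : ℝ, 0 < C ∧ ∀ f : ℝ → ℝ≥0∞, Measurable f →
      ρZ f ≤ ENNReal.ofReal C * ρY f

/-!
If `I ∈ Δ₂`, the inequality `(f + g)^*(t) ≤ f^*(t/2) + g^*(t/2)` turns into the quasi-triangle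
inequality `‖f + g‖ ≤ C (‖f‖ + ‖g‖)`; the remaining properties hold for every `I` because they
hold pointwise for `f ↦ f^*(t)`. Conversely, `‖χ_(0,s]‖` and `‖χ_(s,2s]‖` are at most `I(s)`,
while `‖χ_(0,2s]‖ ≥ I(τ)` for every `τ < 2s`, so the quasi-triangle inequality gives
`I(τ) ≤ 2C I(s)`, and applying it twice yields `Δ₂`.
-/

def distribution (f : ℝ → ℝ≥0∞) (l : ℝ≥0∞) : ℝ≥0∞ :=
  volume {s ∈ Ioo (0:ℝ) 1 | l < f s}

section Rearrangement

variable {f g : ℝ → ℝ≥0∞} {t w : ℝ} {c l : ℝ≥0∞}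

theorem distribution_antitone (f : ℝ → ℝ≥0∞) : Antitone (distribution f) :=
  fun _ _ hab => measure_mono fun _ hs => ⟨hs.1, hab.trans_lt hs.2⟩

theorem rearr_le_of_distribution_le (h : distribution f l ≤ ENNReal.ofReal t) :
    rearr f t ≤ l :=
  sInf_le h

theorem distribution_le_of_rearr_lt (h : rearr f t < l) :
    distribution f l ≤ ENNReal.ofReal t := by
  obtain ⟨a, ha, hal⟩ := sInf_lt_iff.mp h
  exact (distribution_antitone f hal.le).trans ha

theorem rearr_antitone (f : ℝ → ℝ≥0∞) : Antitone (rearr f) :=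
  fun _ _ hab => sInf_le_sInf fun _ hl => hl.trans (ENNReal.ofReal_le_ofReal hab)

theorem rearr_mono_of_ae_le (h : ∀ᵐ s ∂(volume.restrict (Ioo (0:ℝ) 1)), f s ≤ g s)
    (t : ℝ) : rearr f t ≤ rearr g t := by
  refine sInf_le_sInf fun l hl => le_trans (measure_mono_ae ?_) hl
  filter_upwards [(ae_restrict_iff' measurableSet_Ioo).mp h] with s hs ⟨hs01, hls⟩
  exact ⟨hs01, hls.trans_le (hs hs01)⟩

theorem rearr_le_of_forall_le (h : ∀ s ∈ Ioo (0:ℝ) 1, f s ≤ c) (t : ℝ) : rearr f t ≤ c := by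
  refine rearr_le_of_distribution_le ?_
  have hempty : {s ∈ Ioo (0:ℝ) 1 | c < f s} = ∅ :=
    eq_empty_of_forall_notMem fun s hs => (h s hs.1).not_gt hs.2
  rw [distribution, hempty, measure_empty]
  exact zero_le

theorem le_rearr_of_le_on_Ioo (hw : w ≤ 1) (ht0 : 0 ≤ t) (htw : t < w)
    (h : ∀ s ∈ Ioo (0:ℝ) w, c ≤ f s) : c ≤ rearr f t := by
  refine le_sInf fun l hl => not_lt.mp fun hlc => ?_
  have hsub : Ioo (0:ℝ) w ⊆ {s ∈ Ioo (0:ℝ) 1 | l < f s} :=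
    fun s hs => ⟨⟨hs.1, hs.2.trans_le hw⟩, hlc.trans_le (h s hs)⟩
  have : ENNReal.ofReal w ≤ ENNReal.ofReal t := by
    simpa [Real.volume_Ioo] using (measure_mono hsub).trans hl
  exact htw.not_ge ((ENNReal.ofReal_le_ofReal_iff ht0).mp this)

theorem rearr_le_of_forall_Ioo (ht1 : t < 1)
    (h : ∀ s ∈ Ioo t 1, rearr f s ≤ l) : rearr f t ≤ l := by
  refine le_of_forall_gt_imp_ge_of_dense fun c hc => rearr_le_of_distribution_le ?_
  refine ENNReal.le_of_forall_pos_le_add fun ε hε _ => ?_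
  set s := min (t + ε / 2) ((t + 1) / 2)
  have hs : s ∈ Ioo t 1 := ⟨lt_min (by linarith [NNReal.coe_pos.mpr hε]) (by linarith),
    (min_le_right _ _).trans_lt (by linarith)⟩
  calc distribution f c ≤ ENNReal.ofReal s :=
        distribution_le_of_rearr_lt ((h s hs).trans_lt hc)
    _ ≤ ENNReal.ofReal (t + ε) :=
        ENNReal.ofReal_le_ofReal ((min_le_left _ _).trans (by linarith [NNReal.coe_pos.mpr hε]))
    _ ≤ ENNReal.ofReal t + ε := by
        simpa using ENNReal.ofReal_add_le (p := t) (q := ε)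

theorem rearr_rearr (ht0 : 0 ≤ t) (ht1 : t < 1) : rearr (rearr f) t = rearr f t := by
  refine le_antisymm (rearr_le_of_distribution_le ?_) ?_
  · calc distribution (rearr f) (rearr f t) ≤ volume (Ioo 0 t) :=
          measure_mono fun s hs => ⟨hs.1.1, lt_of_not_ge fun hts =>
            (rearr_antitone f hts).not_gt hs.2⟩
      _ = ENNReal.ofReal t := by simp [Real.volume_Ioo]
  · exact rearr_le_of_forall_Ioo ht1 fun s hs =>
      le_rearr_of_le_on_Ioo hs.2.le ht0 hs.1 fun r hr => rearr_antitone f hr.2.le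

theorem distribution_const_mul (hc0 : c ≠ 0) (hc : c ≠ ⊤) (l : ℝ≥0∞) :
    distribution (fun s => c * f s) l = distribution f (l / c) := by
  simp only [distribution, ENNReal.div_lt_iff (Or.inl hc0) (Or.inl hc), mul_comm]

theorem rearr_const_mul (hc : c ≠ ⊤) (f : ℝ → ℝ≥0∞) (t : ℝ) :
    rearr (fun s => c * f s) t = c * rearr f t := by
  rcases eq_or_ne c 0 with rfl | hc0
  · simpa using rearr_le_of_forall_le (f := fun _ => 0) (c := 0) (fun _ _ => le_rfl) t
  refine le_antisymm (le_of_forall_gt_imp_ge_of_dense fun b hb => ?_)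
    (le_of_forall_gt_imp_ge_of_dense fun b hb => ?_)
  · refine rearr_le_of_distribution_le ?_
    rw [distribution_const_mul hc0 hc]
    refine distribution_le_of_rearr_lt ?_
    rwa [ENNReal.lt_div_iff_mul_lt (Or.inl hc0) (Or.inl hc), mul_comm]
  · have : distribution f (b / c) ≤ ENNReal.ofReal t := by
      rw [← distribution_const_mul hc0 hc]
      exact distribution_le_of_rearr_lt hb
    calc c * rearr f t ≤ c * (b / c) := by gcongr; exact rearr_le_of_distribution_le this
      _ ≤ b := ENNReal.mul_div_le

theorem distribution_add_le (f g : ℝ → ℝ≥0∞) (a b : ℝ≥0∞) :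
    distribution (fun s => f s + g s) (a + b) ≤ distribution f a + distribution g b := by
  refine (measure_mono fun s hs => ?_).trans (measure_union_le _ _)
  by_contra! h
  simp only [mem_union, mem_ofPred_eq, not_or, not_and, not_lt] at h
  exact hs.2.not_ge (add_le_add (h.1 hs.1) (h.2 hs.1))

theorem rearr_add_le (f g : ℝ → ℝ≥0∞) (ht : 0 ≤ t) :
    rearr (fun s => f s + g s) t ≤ rearr f (t / 2) + rearr g (t / 2) := by
  set a := rearr f (t / 2)
  set b := rearr g (t / 2)
  refine ENNReal.le_of_forall_pos_le_add fun ε hε hab => ?_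
  have hε2 : (ε : ℝ≥0∞) / 2 ≠ 0 := by simpa using hε.ne'
  have hdist : distribution (fun s => f s + g s) ((a + ε / 2) + (b + ε / 2)) ≤
      ENNReal.ofReal t :=
    calc _ ≤ distribution f (a + ε / 2) + distribution g (b + ε / 2) :=
          distribution_add_le f g _ _
      _ ≤ ENNReal.ofReal (t / 2) + ENNReal.ofReal (t / 2) := by
          gcongr <;> refine distribution_le_of_rearr_lt (ENNReal.lt_add_right ?_ hε2)
          exacts [(ENNReal.add_lt_top.mp hab).1.ne, (ENNReal.add_lt_top.mp hab).2.ne]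
      _ = ENNReal.ofReal t := by
          rw [← ENNReal.ofReal_add (by linarith) (by linarith), add_halves]
  calc rearr (fun s => f s + g s) t ≤ (a + ε / 2) + (b + ε / 2) :=
        rearr_le_of_distribution_le hdist
    _ = a + b + ε := by rw [add_add_add_comm, ENNReal.add_halves]

theorem distribution_iSup {fn : ℕ → ℝ → ℝ≥0∞}
    (hmono : ∀ᵐ s ∂(volume.restrict (Ioo (0:ℝ) 1)), Monotone fun n => fn n s)
    (hsup : ∀ᵐ s ∂(volume.restrict (Ioo (0:ℝ) 1)), ⨆ n, fn n s = f s) (l : ℝ≥0∞) :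
    distribution f l = ⨆ n, distribution (fn n) l := by
  set G := {s : ℝ | s ∈ Ioo (0:ℝ) 1 → Monotone (fun n => fn n s) ∧ ⨆ n, fn n s = f s}
  have hG : volume Gᶜ = 0 := (ae_restrict_iff' measurableSet_Ioo).mp (hmono.and hsup)
  have hunion : ⋃ n, {s ∈ Ioo (0:ℝ) 1 | l < fn n s} ∩ G = {s ∈ Ioo (0:ℝ) 1 | l < f s} ∩ G := by
    ext s
    simp only [mem_iUnion, mem_inter_iff, mem_sep_iff]
    constructor
    · rintro ⟨n, ⟨hs, hl⟩, hsG⟩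
      exact ⟨⟨hs, (hsG hs).2 ▸ hl.trans_le (le_iSup (fun n => fn n s) n)⟩, hsG⟩
    · rintro ⟨⟨hs, hl⟩, hsG⟩
      obtain ⟨n, hn⟩ := lt_iSup_iff.mp ((hsG hs).2 ▸ hl)
      exact ⟨n, ⟨hs, hn⟩, hsG⟩
  have hmono' : Monotone fun n => {s ∈ Ioo (0:ℝ) 1 | l < fn n s} ∩ G :=
    fun m n hmn s ⟨⟨hs, hl⟩, hsG⟩ => ⟨⟨hs, hl.trans_le ((hsG hs).1 hmn)⟩, hsG⟩
  simp only [distribution, ← measure_inter_conull (s := {s ∈ Ioo (0:ℝ) 1 | _ < _}) hG,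
    ← hunion, hmono'.measure_iUnion]

theorem rearr_iSup {fn : ℕ → ℝ → ℝ≥0∞}
    (hmono : ∀ᵐ s ∂(volume.restrict (Ioo (0:ℝ) 1)), Monotone fun n => fn n s)
    (hsup : ∀ᵐ s ∂(volume.restrict (Ioo (0:ℝ) 1)), ⨆ n, fn n s = f s) (t : ℝ) :
    ⨆ n, rearr (fn n) t = rearr f t := by
  refine le_antisymm (iSup_le fun n => sInf_le_sInf fun l hl => ?_)
    (le_of_forall_gt_imp_ge_of_dense fun b hb => rearr_le_of_distribution_le ?_)
  · change distribution f l ≤ _ at hl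
    rw [distribution_iSup hmono hsup] at hl
    exact (le_iSup (fun m => distribution (fn m) l) n).trans hl
  · rw [distribution_iSup hmono hsup]
    exact iSup_le fun n => distribution_le_of_rearr_lt ((le_iSup _ n).trans_lt hb)

theorem rearr_eq_zero_of_ae_eq_zero (h : f =ᵐ[volume.restrict (Ioo (0:ℝ) 1)] 0) (t : ℝ) :
    rearr f t = 0 :=
  le_antisymm ((rearr_mono_of_ae_le (h.mono fun _ hs => hs.le) t).trans
    (rearr_le_of_forall_le (fun _ _ => le_rfl) t)) zero_le

/-- `rearr f 0` is the essential supremum of `f` on `(0,1)`. -/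
theorem ae_eq_zero_of_rearr_zero_eq_zero (h : rearr f 0 = 0) :
    f =ᵐ[volume.restrict (Ioo (0:ℝ) 1)] 0 := by
  rw [EventuallyEq, ae_iff, Measure.restrict_apply' measurableSet_Ioo]
  have hnull (n : ℕ) : distribution f (n : ℝ≥0∞)⁻¹ = 0 := by
    simpa using distribution_le_of_rearr_lt (t := 0) (h ▸ ENNReal.inv_pos.mpr (by simp))
  refine measure_mono_null (fun s ⟨hs, hs01⟩ => ?_) (measure_iUnion_null hnull)
  obtain ⟨n, hn⟩ := ENNReal.exists_inv_nat_lt (show f s ≠ 0 from hs)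
  exact mem_iUnion.mpr ⟨n, hs01, hn⟩

end Rearrangement

section MNorm

variable {I : ℝ → ℝ} {f g : ℝ → ℝ≥0∞} {t : ℝ}

theorem le_mNorm (ht : t ∈ Ioo (0:ℝ) 1) : ENNReal.ofReal (I t) * rearr f t ≤ mNorm I f :=
  le_iSup₂ (f := fun t (_ : t ∈ Ioo (0:ℝ) 1) => ENNReal.ofReal (I t) * rearr f t) t ht

theorem mNorm_congr_rearr (h : ∀ t ∈ Ioo (0:ℝ) 1, rearr f t = rearr g t) :
    mNorm I f = mNorm I g :=
  iSup_congr fun t => iSup_congr fun ht => by rw [h t ht]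

theorem mNorm_rearr (f : ℝ → ℝ≥0∞) : mNorm I (rearr f) = mNorm I f :=
  mNorm_congr_rearr fun _ ht => rearr_rearr ht.1.le ht.2

theorem mNorm_mono_of_ae_le (h : ∀ᵐ s ∂(volume.restrict (Ioo (0:ℝ) 1)), f s ≤ g s) :
    mNorm I f ≤ mNorm I g :=
  iSup₂_mono fun t _ => by gcongr; exact rearr_mono_of_ae_le h t

theorem mNorm_const_mul {c : ℝ≥0∞} (hc : c ≠ ⊤) (f : ℝ → ℝ≥0∞) :
    mNorm I (fun s => c * f s) = c * mNorm I f := by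
  simp only [mNorm, rearr_const_mul hc, ENNReal.mul_iSup, mul_left_comm c]

theorem mNorm_iSup {fn : ℕ → ℝ → ℝ≥0∞}
    (hmono : ∀ᵐ s ∂(volume.restrict (Ioo (0:ℝ) 1)), Monotone fun n => fn n s)
    (hsup : ∀ᵐ s ∂(volume.restrict (Ioo (0:ℝ) 1)), ⨆ n, fn n s = f s) :
    ⨆ n, mNorm I (fn n) = mNorm I f := by
  simp only [mNorm, ← rearr_iSup hmono hsup, ENNReal.mul_iSup]
  rw [iSup_comm]
  exact iSup_congr fun t => iSup_comm

theorem mNorm_eq_zero_iff (hI : ∀ t ∈ Ioo (0:ℝ) 1, 0 < I t) :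
    mNorm I f = 0 ↔ f =ᵐ[volume.restrict (Ioo (0:ℝ) 1)] 0 := by
  refine ⟨fun h => ae_eq_zero_of_rearr_zero_eq_zero ?_, fun h => ?_⟩
  · refine nonpos_iff_eq_zero.mp (rearr_le_of_forall_Ioo zero_lt_one fun t ht => ?_)
    have := h ▸ le_mNorm (I := I) (f := f) ht
    simpa [(hI t ht).not_ge] using this
  · simp [mNorm, rearr_eq_zero_of_ae_eq_zero h]

theorem mNorm_one_le (hI : ∀ t ∈ Ioo (0:ℝ) 1, I t ≤ 1) : mNorm I (fun _ => 1) ≤ 1 :=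
  iSup₂_le fun t ht => mul_le_one' (ENNReal.ofReal_le_one.mpr (hI t ht))
    (rearr_le_of_forall_le (fun _ _ => le_rfl) t)

end MNorm

section Delta2

variable {I : ℝ → ℝ} {s τ w : ℝ} {A : Set ℝ}

theorem mNorm_indicator_le (hmono : MonotoneOn I (Ioo 0 1)) {a : ℝ} (ha : a ∈ Ioo (0:ℝ) 1)
    (hA : volume A ≤ ENNReal.ofReal a) : mNorm I (A.indicator 1) ≤ ENNReal.ofReal (I a) := by
  refine iSup₂_le fun τ hτ => ?_
  rcases le_or_gt a τ with haτ | hτa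
  · have hzero : rearr (A.indicator 1) τ = 0 := by
      refine nonpos_iff_eq_zero.mp (rearr_le_of_distribution_le ?_)
      calc distribution (A.indicator 1) 0 ≤ volume A :=
            measure_mono fun s hs => by_contra fun hsA => by simp [hsA] at hs
        _ ≤ ENNReal.ofReal τ := hA.trans (ENNReal.ofReal_le_ofReal haτ)
    simp [hzero]
  · calc ENNReal.ofReal (I τ) * rearr (A.indicator 1) τ ≤ ENNReal.ofReal (I a) * 1 := by
          gcongr
          · exact hmono hτ ha hτa.le
          · exact rearr_le_of_forall_le (fun s _ => indicator_le_self' (fun _ _ => zero_le) s) τ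
      _ = ENNReal.ofReal (I a) := mul_one _

theorem ofReal_le_mNorm_indicator (hw : w ≤ 1) (hA : Ioo 0 w ⊆ A) (hτ : τ ∈ Ioo 0 w) :
    ENNReal.ofReal (I τ) ≤ mNorm I (A.indicator 1) :=
  calc ENNReal.ofReal (I τ) = ENNReal.ofReal (I τ) * 1 := (mul_one _).symm
    _ ≤ ENNReal.ofReal (I τ) * rearr (A.indicator 1) τ := by
        gcongr
        exact le_rearr_of_le_on_Ioo hw hτ.1.le hτ.2 fun s hs => by simp [hA hs]
    _ ≤ mNorm I (A.indicator 1) := le_mNorm ⟨hτ.1, hτ.2.trans_le hw⟩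

/-- Testing the quasi-triangle inequality on `χ_(0,2s] = χ_(0,s] + χ_(s,2s]`. -/
theorem le_mul_of_mNorm_add_le (hmono : MonotoneOn I (Ioo 0 1)) {C : ℝ} (hC0 : 0 ≤ C)
    (hC : ∀ f g : ℝ → ℝ≥0∞, Measurable f → Measurable g →
      mNorm I (fun t => f t + g t) ≤ ENNReal.ofReal C * (mNorm I f + mNorm I g))
    (hs : 0 < s) (hs1 : 2 * s ≤ 1) (hIs : 0 ≤ I s) (hτ : τ ∈ Ioo 0 (2 * s)) :
    I τ ≤ 2 * C * I s := by
  have hs' : s ∈ Ioo (0:ℝ) 1 := ⟨hs, by linarith⟩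
  have hsplit : (Ioc 0 (2 * s)).indicator (1 : ℝ → ℝ≥0∞) =
      fun t => (Ioc 0 s).indicator 1 t + (Ioc s (2 * s)).indicator 1 t := by
    rw [← Ioc_union_Ioc_eq_Ioc hs.le (by linarith),
      indicator_union_of_disjoint (Ioc_disjoint_Ioc_of_le le_rfl)]
  have hupper (u : ℝ) : mNorm I ((Ioc u (u + s)).indicator 1) ≤ ENNReal.ofReal (I s) :=
    mNorm_indicator_le hmono hs' (by simp [Real.volume_Ioc])
  refine (ENNReal.ofReal_le_ofReal_iff (by positivity)).mp ?_
  calc ENNReal.ofReal (I τ) ≤ mNorm I ((Ioc 0 (2 * s)).indicator 1) :=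
        ofReal_le_mNorm_indicator hs1 Ioo_subset_Ioc_self hτ
    _ ≤ ENNReal.ofReal C * (mNorm I ((Ioc 0 s).indicator 1) +
          mNorm I ((Ioc s (2 * s)).indicator 1)) := by
        rw [hsplit]
        exact hC _ _ (measurable_const.indicator measurableSet_Ioc)
          (measurable_const.indicator measurableSet_Ioc)
    _ ≤ ENNReal.ofReal C * (ENNReal.ofReal (I s) + ENNReal.ofReal (I s)) := by
        gcongr
        · simpa using hupper 0
        · simpa [two_mul] using hupper s
    _ = ENNReal.ofReal (2 * C * I s) := by
        rw [← ENNReal.ofReal_add hIs hIs, ← ENNReal.ofReal_mul hC0]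
        ring_nf

/-- `le_mul_of_mNorm_add_le` bounds `I τ` only for `τ < 2s`, so we pass through `s = 3t/2`. -/
theorem delta2_of_mNorm_add_le (hmono : MonotoneOn I (Ioo 0 1))
    (hI : ∀ t ∈ Ioo (0:ℝ) 1, 0 ≤ I t) {C : ℝ} (hC0 : 0 < C)
    (hC : ∀ f g : ℝ → ℝ≥0∞, Measurable f → Measurable g →
      mNorm I (fun t => f t + g t) ≤ ENNReal.ofReal C * (mNorm I f + mNorm I g)) :
    Delta2 I := by
  refine ⟨2 * C * (2 * C), by positivity, fun t ⟨ht0, ht⟩ => ?_⟩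
  set s := min (3 * t / 2) (1 / 2)
  have hs : t < s := lt_min (by linarith) ht
  have hs2t : s < 2 * t := (min_le_left _ _).trans_lt (by linarith)
  have hs_half : s ≤ 1 / 2 := min_le_right _ _
  have hIs : I (2 * t) ≤ 2 * C * I s :=
    le_mul_of_mNorm_add_le hmono hC0.le hC (ht0.trans hs) (by linarith)
      (hI s ⟨ht0.trans hs, by linarith⟩) ⟨by linarith, by linarith⟩
  have hIt : I s ≤ 2 * C * I t :=
    le_mul_of_mNorm_add_le hmono hC0.le hC ht0 (by linarith) (hI t ⟨ht0, by linarith⟩)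
      ⟨ht0.trans hs, hs2t⟩
  calc I (2 * t) ≤ 2 * C * I s := hIs
    _ ≤ 2 * C * (2 * C * I t) := by gcongr
    _ = 2 * C * (2 * C) * I t := by ring

theorem mNorm_add_le_of_delta2 {C : ℝ} (hC0 : 0 ≤ C)
    (hC : ∀ t ∈ Ioo (0:ℝ) (1 / 2), I (2 * t) ≤ C * I t) (f g : ℝ → ℝ≥0∞) :
    mNorm I (fun s => f s + g s) ≤ ENNReal.ofReal C * (mNorm I f + mNorm I g) := by
  refine iSup₂_le fun t ht => ?_
  have ht2 : t / 2 ∈ Ioo (0:ℝ) 1 := ⟨by linarith [ht.1], by linarith [ht.2]⟩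
  have hIt : I t ≤ C * I (t / 2) := by
    simpa [mul_div_cancel₀] using hC (t / 2) ⟨ht2.1, by linarith [ht.2]⟩
  calc ENNReal.ofReal (I t) * rearr (fun s => f s + g s) t
      ≤ ENNReal.ofReal (C * I (t / 2)) * (rearr f (t / 2) + rearr g (t / 2)) := by
        gcongr
        exact rearr_add_le f g ht.1.le
    _ = ENNReal.ofReal C * (ENNReal.ofReal (I (t / 2)) * rearr f (t / 2) +
          ENNReal.ofReal (I (t / 2)) * rearr g (t / 2)) := by
        rw [ENNReal.ofReal_mul hC0, mul_add, mul_add, mul_assoc, mul_assoc]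
    _ ≤ ENNReal.ofReal C * (mNorm I f + mNorm I g) := by
        gcongr <;> exact le_mNorm ht2

end Delta2

/-- Proposition 3.1 / `prop:fact`.  For nondecreasing `I : (0,1) → (0,1)`,
the functional `‖f‖_{m_I} = sup_{0<t<1} I(t) f^*(t)` is a rearrangement-invariant quasinorm
if and only if `I ∈ Δ₂`. -/
theorem statement3 (I : ℝ → ℝ) (hmono : MonotoneOn I (Set.Ioo 0 1))
    (hmaps : ∀ t ∈ Set.Ioo (0:ℝ) 1, I t ∈ Set.Ioo (0:ℝ) 1) :
    ((∀ f : ℝ → ℝ≥0∞, Measurable f →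
        (mNorm I f = 0 ↔ f =ᵐ[volume.restrict (Set.Ioo (0:ℝ) 1)] 0)) ∧
     (∀ f : ℝ → ℝ≥0∞, Measurable f → ∀ a : ℝ, 0 ≤ a →
        mNorm I (fun t => ENNReal.ofReal a * f t) = ENNReal.ofReal a * mNorm I f) ∧
     (∃ C : ℝ, 1 ≤ C ∧ ∀ f g : ℝ → ℝ≥0∞, Measurable f → Measurable g →
        mNorm I (fun t => f t + g t) ≤ ENNReal.ofReal C * (mNorm I f + mNorm I g)) ∧
     (∀ f g : ℝ → ℝ≥0∞, Measurable f → Measurable g →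
        (∀ᵐ t ∂(volume.restrict (Set.Ioo (0:ℝ) 1)), f t ≤ g t) →
        mNorm I f ≤ mNorm I g) ∧
     (∀ (fn : ℕ → ℝ → ℝ≥0∞) (f : ℝ → ℝ≥0∞), (∀ n, Measurable (fn n)) → Measurable f →
        (∀ᵐ t ∂(volume.restrict (Set.Ioo (0:ℝ) 1)), Monotone (fun n => fn n t)) →
        (∀ᵐ t ∂(volume.restrict (Set.Ioo (0:ℝ) 1)), (⨆ n, fn n t) = f t) →
        (⨆ n, mNorm I (fn n)) = mNorm I f) ∧
     (mNorm I (fun _ => 1) < ⊤) ∧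
     (∀ f : ℝ → ℝ≥0∞, Measurable f → mNorm I f = mNorm I (rearr f)))
    ↔ Delta2 I := by
  constructor
  · rintro ⟨-, -, ⟨C, hC1, hC⟩, -⟩
    exact delta2_of_mNorm_add_le hmono (fun t ht => (hmaps t ht).1.le) (by linarith) hC
  · rintro ⟨C, hC0, hC⟩
    refine ⟨fun f _ => mNorm_eq_zero_iff fun t ht => (hmaps t ht).1,
      fun f _ a _ => mNorm_const_mul ENNReal.ofReal_ne_top f, ⟨max C 1, le_max_right _ _,
        fun f g _ _ => (mNorm_add_le_of_delta2 hC0.le hC f g).trans ?_⟩,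
      fun f g _ _ hfg => mNorm_mono_of_ae_le hfg,
      fun fn f _ _ hmono hsup => mNorm_iSup hmono hsup,
      (mNorm_one_le fun t ht => (hmaps t ht).2.le).trans_lt ENNReal.one_lt_top,
      fun f _ => (mNorm_rearr f).symm⟩
    gcongr
    exact le_max_left _ _
end
end

section
/- Let I ∈ Δ₂ be an increasing bijection of (0,1) onto (0,1). For measurable f on (0,1) and t ∈ (0,1) define the K-functional K(f,t) = inf{ ‖g‖_{m_I} + t·‖h‖_∞ : f = g + h, g and h measurable on (0,1) }. Then there exist c₁, c₂ > 0 such that for every measurable f with ‖f‖_{m_I} < ∞ and every t ∈ (0,1): c₁·sup_{0<s≤I^{-1}(t)} I(s) f^*(s) ≤ K(f,t) ≤ c₂·sup_{0<s≤I^{-1}(t)} I(s) f^*(s). -/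
open MeasureTheory Set Filter
open scoped ENNReal

noncomputable section

/-- The `K`-functional for the couple `(m_I, L^∞)` over `(0,1)`. -/
def Kmi (I : ℝ → ℝ) (f : ℝ → ℝ≥0∞) (t : ℝ) : ℝ≥0∞ :=
  ⨅ (g : ℝ → ℝ≥0∞) (h : ℝ → ℝ≥0∞)
    (_ : Measurable g ∧ Measurable h ∧ ∀ s ∈ Set.Ioo (0:ℝ) 1, f s = g s + h s),
      mNorm I g + ENNReal.ofReal t * essSup h (volume.restrict (Set.Ioo (0:ℝ) 1))

/-! Write `a = I⁻¹(t)`. For any splitting `f = g + h` one has `f^*(s) ≤ g^*(s) + ‖h‖_∞`, and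
`I(s) ≤ t` for `s ≤ a`, which gives the lower bound with `c₁ = 1`. Conversely, cutting `f` at the
level `λ = f^*(a)`, i.e. `g = (f - λ)₊` and `h = min(f, λ)`, gives `g^* ≤ f^*` with `g^*` vanishing
beyond `a`, and `t‖h‖_∞ ≤ I(a) f^*(a)`; hence the upper bound with `c₂ = 2`. -/

section Rearrangement

variable {f g k : ℝ → ℝ≥0∞}

lemma rearr_mono (h : ∀ x ∈ Ioo (0:ℝ) 1, g x ≤ f x) (t : ℝ) : rearr g t ≤ rearr f t := by
  refine sInf_le_sInf fun l hl => (measure_mono ?_).trans hl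
  exact fun x hx => ⟨hx.1, hx.2.trans_le (h x hx.1)⟩

lemma rearr_le_add_essSup (hsum : ∀ x ∈ Ioo (0:ℝ) 1, f x = g x + k x) (t : ℝ) :
    rearr f t ≤ rearr g t + essSup k (volume.restrict (Ioo (0:ℝ) 1)) := by
  set b := essSup k (volume.restrict (Ioo (0:ℝ) 1))
  have hk : ∀ᵐ x, x ∈ Ioo (0:ℝ) 1 → k x ≤ b :=
    (ae_restrict_iff' measurableSet_Ioo).1 (ENNReal.ae_le_essSup k)
  unfold rearr
  rw [ENNReal.sInf_add]
  refine le_iInf₂ fun l hl => sInf_le ?_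
  have hsub : {x ∈ Ioo (0:ℝ) 1 | l + b < f x} ≤ᵐ[volume] {x ∈ Ioo (0:ℝ) 1 | l < g x} := by
    filter_upwards [hk] with x hkx
    rintro ⟨hx, hlt⟩
    refine ⟨hx, lt_of_not_ge fun hgx => hlt.not_ge ?_⟩
    rw [hsum x hx]
    exact add_le_add hgx (hkx hx)
  exact (measure_mono_ae hsub).trans hl

lemma volume_rearr_lt_le (f : ℝ → ℝ≥0∞) (t : ℝ) :
    volume {x ∈ Ioo (0:ℝ) 1 | rearr f t < f x} ≤ ENNReal.ofReal t := by
  set S := {l : ℝ≥0∞ | volume {x ∈ Ioo (0:ℝ) 1 | l < f x} ≤ ENNReal.ofReal t}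
  have htop : ⊤ ∈ S := by simp [S]
  obtain ⟨u, hu, hlim, huS⟩ := exists_seq_tendsto_sInf ⟨⊤, htop⟩ (OrderBot.bddBelow S)
  have hcover : {x ∈ Ioo (0:ℝ) 1 | rearr f t < f x} = ⋃ n, {x ∈ Ioo (0:ℝ) 1 | u n < f x} := by
    ext x
    simp only [mem_ofPred_eq, mem_iUnion]
    refine ⟨fun ⟨hx, hlt⟩ => ?_, fun ⟨n, hx, hlt⟩ => ⟨hx, (sInf_le (huS n)).trans_lt hlt⟩⟩
    obtain ⟨n, hn⟩ := (hlim.eventually (gt_mem_nhds hlt)).exists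
    exact ⟨n, hx, hn⟩
  have hmono : Monotone fun n => {x ∈ Ioo (0:ℝ) 1 | u n < f x} :=
    fun m n hmn x hx => ⟨hx.1, (hu hmn).trans_lt hx.2⟩
  rw [hcover, hmono.measure_iUnion]
  exact iSup_le huS

lemma rearr_tsub_rearr_eq_zero {a s : ℝ} (has : a ≤ s) :
    rearr (fun x => f x - rearr f a) s = 0 := by
  refine le_antisymm (sInf_le ?_) bot_le
  simp only [mem_ofPred_eq, tsub_pos_iff_lt]
  exact (volume_rearr_lt_le f a).trans (ENNReal.ofReal_le_ofReal has)

end Rearrangement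

section KFunctional

variable {I : ℝ → ℝ} {f : ℝ → ℝ≥0∞}

lemma Kmi_le_of_eq_add {g k : ℝ → ℝ≥0∞} (hg : Measurable g) (hk : Measurable k)
    (hsum : ∀ x ∈ Ioo (0:ℝ) 1, f x = g x + k x) (t : ℝ) :
    Kmi I f t ≤ mNorm I g + ENNReal.ofReal t * essSup k (volume.restrict (Ioo (0:ℝ) 1)) :=
  iInf_le_of_le g <| iInf_le_of_le k <| iInf_le _ ⟨hg, hk, hsum⟩

lemma iSup_Ioc_le_Kmi (hI : MonotoneOn I (Ioo 0 1)) {a : ℝ} (ha : a < 1) :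
    ⨆ s ∈ Ioc (0:ℝ) a, ENNReal.ofReal (I s) * rearr f s ≤ Kmi I f (I a) := by
  refine le_iInf fun g => le_iInf fun k => le_iInf fun ⟨_, _, hsum⟩ => iSup₂_le fun s hs => ?_
  have hs1 : s ∈ Ioo (0:ℝ) 1 := ⟨hs.1, hs.2.trans_lt ha⟩
  have hIs : ENNReal.ofReal (I s) ≤ ENNReal.ofReal (I a) :=
    ENNReal.ofReal_le_ofReal (hI hs1 ⟨hs.1.trans_le hs.2, ha⟩ hs.2)
  calc ENNReal.ofReal (I s) * rearr f s
      ≤ ENNReal.ofReal (I s) * rearr g s +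
          ENNReal.ofReal (I s) * essSup k (volume.restrict (Ioo (0:ℝ) 1)) := by
        rw [← mul_add]
        exact mul_le_mul_right (rearr_le_add_essSup hsum s) _
    _ ≤ mNorm I g + ENNReal.ofReal (I a) * essSup k (volume.restrict (Ioo (0:ℝ) 1)) :=
        add_le_add (le_iSup₂ (f := fun u (_ : u ∈ Ioo (0:ℝ) 1) =>
          ENNReal.ofReal (I u) * rearr g u) s hs1) (mul_le_mul_left hIs _)

lemma mNorm_tsub_rearr_le (a : ℝ) :
    mNorm I (fun x => f x - rearr f a) ≤ ⨆ s ∈ Ioc (0:ℝ) a, ENNReal.ofReal (I s) * rearr f s := by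
  refine iSup₂_le fun s hs => ?_
  rcases le_or_gt s a with hsa | has
  · calc ENNReal.ofReal (I s) * rearr (fun x => f x - rearr f a) s
        ≤ ENNReal.ofReal (I s) * rearr f s :=
          mul_le_mul_right (rearr_mono (fun _ _ => tsub_le_self) s) _
      _ ≤ _ := le_iSup₂ (f := fun u (_ : u ∈ Ioc (0:ℝ) a) =>
          ENNReal.ofReal (I u) * rearr f u) s ⟨hs.1, hsa⟩
  · rw [rearr_tsub_rearr_eq_zero has.le, mul_zero]
    exact zero_le

lemma Kmi_le_two_mul_iSup_Ioc (hf : Measurable f) {a : ℝ} (ha : 0 < a) :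
    Kmi I f (I a) ≤ 2 * ⨆ s ∈ Ioc (0:ℝ) a, ENNReal.ofReal (I s) * rearr f s := by
  set M := ⨆ s ∈ Ioc (0:ℝ) a, ENNReal.ofReal (I s) * rearr f s
  set lam := rearr f a
  have hsum : ∀ x ∈ Ioo (0:ℝ) 1, f x = (f x - lam) + min (f x) lam := fun x _ => by
    rcases le_total lam (f x) with hle | hle
    · rw [min_eq_right hle, tsub_add_cancel_of_le hle]
    · rw [min_eq_left hle, tsub_eq_zero_of_le hle, zero_add]
  have hess : essSup (fun x => min (f x) lam) (volume.restrict (Ioo (0:ℝ) 1)) ≤ lam :=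
    essSup_le_of_ae_le lam (.of_forall fun x => min_le_right _ _)
  have hlam : ENNReal.ofReal (I a) * lam ≤ M :=
    le_iSup₂ (f := fun u (_ : u ∈ Ioc (0:ℝ) a) => ENNReal.ofReal (I u) * rearr f u) a ⟨ha, le_rfl⟩
  calc Kmi I f (I a)
      ≤ mNorm I (fun x => f x - lam) + ENNReal.ofReal (I a) *
          essSup (fun x => min (f x) lam) (volume.restrict (Ioo (0:ℝ) 1)) :=
        Kmi_le_of_eq_add (hf.sub measurable_const) (hf.min measurable_const) hsum _
    _ ≤ M + M := add_le_add (mNorm_tsub_rearr_le a) ((mul_le_mul_right hess _).trans hlam)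
    _ = 2 * M := (two_mul M).symm

end KFunctional

theorem statement7_general (I : ℝ → ℝ)
    (hsm : StrictMonoOn I (Set.Ioo 0 1))
    (J : ℝ → ℝ) (hJ : Set.InvOn J I (Set.Ioo 0 1) (Set.Ioo 0 1))
    (hJmaps : Set.MapsTo J (Set.Ioo 0 1) (Set.Ioo 0 1)) :
    ∃ c₁ c₂ : ℝ, 0 < c₁ ∧ 0 < c₂ ∧
      ∀ f : ℝ → ℝ≥0∞, Measurable f → mNorm I f < ⊤ → ∀ t ∈ Set.Ioo (0:ℝ) 1,
        ENNReal.ofReal c₁ *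
            (⨆ s ∈ Set.Ioc (0:ℝ) (J t), ENNReal.ofReal (I s) * rearr f s) ≤ Kmi I f t ∧
          Kmi I f t ≤
            ENNReal.ofReal c₂ *
              ⨆ s ∈ Set.Ioc (0:ℝ) (J t), ENNReal.ofReal (I s) * rearr f s := by
  refine ⟨1, 2, one_pos, two_pos, fun f hf _ t ht => ?_⟩
  set a := J t
  have ha : a ∈ Ioo (0:ℝ) 1 := hJmaps ht
  have hIa : I a = t := hJ.2 ht
  rw [ENNReal.ofReal_one, one_mul, ENNReal.ofReal_ofNat, ← hIa]
  exact ⟨iSup_Ioc_le_Kmi hsm.monotoneOn ha.2, Kmi_le_two_mul_iSup_Ioc hf ha.1⟩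

/-- Lemma 3.7 / `lem:KFunctional`.  For `I ∈ Δ₂` an increasing bijection of
`(0,1)` onto itself, `K(f, t, m_I, L^∞) ≈ sup_{0<s≤I⁻¹(t)} I(s) f^*(s)`. -/
theorem statement7 (I : ℝ → ℝ) (hd2 : Delta2 I)
    (hsm : StrictMonoOn I (Set.Ioo 0 1))
    (hbij : Set.BijOn I (Set.Ioo 0 1) (Set.Ioo 0 1))
    (J : ℝ → ℝ) (hJ : Set.InvOn J I (Set.Ioo 0 1) (Set.Ioo 0 1))
    (hJmaps : Set.MapsTo J (Set.Ioo 0 1) (Set.Ioo 0 1)) :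
    ∃ c₁ c₂ : ℝ, 0 < c₁ ∧ 0 < c₂ ∧
      ∀ f : ℝ → ℝ≥0∞, Measurable f → mNorm I f < ⊤ → ∀ t ∈ Set.Ioo (0:ℝ) 1,
        ENNReal.ofReal c₁ *
            (⨆ s ∈ Set.Ioc (0:ℝ) (J t), ENNReal.ofReal (I s) * rearr f s) ≤ Kmi I f t ∧
          Kmi I f t ≤
            ENNReal.ofReal c₂ *
              ⨆ s ∈ Set.Ioc (0:ℝ) (J t), ENNReal.ofReal (I s) * rearr f s :=
  statement7_general I hsm J hJ hJmaps
end
end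

section
/- Let I : (0,1) → (0,1) be quasiconcave and satisfy condition (★). Then: (i) there exists C > 0 such that sup_{0<t<1} (1/I(t)) ∫_0^t f^*(s) ds ≤ C·sup_{0<t<1} (t/I(t)) f^*(t) for every f ∈ M_+(0,1) (i.e. R_I : m_{Ĩ} → L^∞ is bounded); (ii) for every measurable f on (0,1), sup_{0<t<1} I(t)·(R_I f)^*(t) ≤ ∫_0^1 |f(s)| ds, where (R_I f)(t) = (1/I(t))∫_0^t f(s) ds (i.e. R_I : L¹ → m_I is bounded). -/
open MeasureTheory Set Filter
open scoped ENNReal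

noncomputable section

/-- Lemma 4.4 / `lem:BoundednessOfRI`.  For quasiconcave `I` satisfying
(★): (i) `R_I : m_Ĩ → L^∞` is bounded; (ii) `R_I : L¹ → m_I` with constant one, i.e.
`sup_{0<t<1} I(t) (R_I f)^*(t) ≤ ‖f‖₁`. -/
theorem statement12 (I : ℝ → ℝ) (hqc : Quasiconcave I) (hstar : StarCond I) :
    (∃ C : ℝ, 0 < C ∧ ∀ f : ℝ → ℝ≥0∞, Measurable f →
      (⨆ t ∈ Set.Ioo (0:ℝ) 1,
          (ENNReal.ofReal (I t))⁻¹ * ∫⁻ s in Set.Ioo (0:ℝ) t, rearr f s) ≤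
        ENNReal.ofReal C * ⨆ t ∈ Set.Ioo (0:ℝ) 1, ENNReal.ofReal (t / I t) * rearr f t) ∧
    (∀ f : ℝ → ℝ≥0∞, Measurable f →
      (⨆ t ∈ Set.Ioo (0:ℝ) 1, ENNReal.ofReal (I t) * rearr (RI I f) t) ≤
        ∫⁻ s in Set.Ioo (0:ℝ) 1, f s) := by

  obtain ⟨bij, mono, anti, h0, h1'⟩ := hqc
  obtain ⟨C, hC, hstarC⟩ := hstar
  constructor
  · refine ⟨C, hC, fun f hf => ?_⟩
    set M := ⨆ t ∈ Set.Ioo (0:ℝ) 1, ENNReal.ofReal (t / I t) * rearr f t with hM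
    by_cases hMtop : M = ⊤
    · rw [hMtop, ENNReal.mul_top (by simpa using hC : ENNReal.ofReal C ≠ 0)]
      exact le_top
    refine iSup₂_le fun t ht => ?_
    have hIt : I t ∈ Set.Ioo (0:ℝ) 1 := bij.mapsTo ht
    have hIt0 : ENNReal.ofReal (I t) ≠ 0 := (ENNReal.ofReal_pos.mpr hIt.1).ne'
    have key : ∫⁻ s in Set.Ioo (0:ℝ) t, rearr f s ≤ M * ENNReal.ofReal (C * I t) := by
      calc ∫⁻ s in Set.Ioo (0:ℝ) t, rearr f s
          ≤ ∫⁻ s in Set.Ioo (0:ℝ) t, M * ENNReal.ofReal (I s / s) := by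
            refine setLIntegral_mono' measurableSet_Ioo fun s hs => ?_
            have hs1 : s ∈ Set.Ioo (0:ℝ) 1 := ⟨hs.1, hs.2.trans ht.2⟩
            have hIs : I s ∈ Set.Ioo (0:ℝ) 1 := bij.mapsTo hs1
            have hpos : 0 < s / I s := div_pos hs1.1 hIs.1
            have ha0 : ENNReal.ofReal (s / I s) ≠ 0 := (ENNReal.ofReal_pos.mpr hpos).ne'
            have hb : ENNReal.ofReal (s / I s) * rearr f s ≤ M :=
              le_biSup (fun t => ENNReal.ofReal (t / I t) * rearr f t) hs1
            have heq : rearr f s =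
                (ENNReal.ofReal (s / I s))⁻¹ * (ENNReal.ofReal (s / I s) * rearr f s) := by
              rw [← mul_assoc, ENNReal.inv_mul_cancel ha0 ENNReal.ofReal_ne_top, one_mul]
            calc rearr f s
                = (ENNReal.ofReal (s / I s))⁻¹ * (ENNReal.ofReal (s / I s) * rearr f s) := heq
              _ ≤ (ENNReal.ofReal (s / I s))⁻¹ * M := mul_le_mul_right hb _
              _ = M * ENNReal.ofReal (I s / s) := by
                  rw [← ENNReal.ofReal_inv_of_pos hpos, inv_div, mul_comm]
        _ = M * ∫⁻ s in Set.Ioo (0:ℝ) t, ENNReal.ofReal (I s / s) :=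
            lintegral_const_mul' _ _ hMtop
        _ ≤ M * ENNReal.ofReal (C * I t) := mul_le_mul_right (hstarC t ht) M
    calc (ENNReal.ofReal (I t))⁻¹ * ∫⁻ s in Set.Ioo (0:ℝ) t, rearr f s
        ≤ (ENNReal.ofReal (I t))⁻¹ * (M * ENNReal.ofReal (C * I t)) := mul_le_mul_right key _
      _ = ENNReal.ofReal C * M := by
          rw [ENNReal.ofReal_mul hC.le]
          have : (ENNReal.ofReal (I t))⁻¹ * (M * (ENNReal.ofReal C * ENNReal.ofReal (I t))) =
              ENNReal.ofReal C * M * ((ENNReal.ofReal (I t))⁻¹ * ENNReal.ofReal (I t)) := by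
            ring
          rw [this, ENNReal.inv_mul_cancel hIt0 ENNReal.ofReal_ne_top, mul_one]
  · intro f hf
    set L := ∫⁻ s in Set.Ioo (0:ℝ) 1, f s with hL
    refine iSup₂_le fun t ht => ?_
    have hIt : I t ∈ Set.Ioo (0:ℝ) 1 := bij.mapsTo ht
    have hIt0 : ENNReal.ofReal (I t) ≠ 0 := (ENNReal.ofReal_pos.mpr hIt.1).ne'
    have hre : rearr (RI I f) t ≤ L * (ENNReal.ofReal (I t))⁻¹ := by
      apply sInf_le
      have hsub : {s ∈ Set.Ioo (0:ℝ) 1 | L * (ENNReal.ofReal (I t))⁻¹ < RI I f s}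
          ⊆ Set.Ioo (0:ℝ) t := by
        rintro s ⟨hs, hlt⟩
        have hIs : I s ∈ Set.Ioo (0:ℝ) 1 := bij.mapsTo hs
        have hle : RI I f s ≤ (ENNReal.ofReal (I s))⁻¹ * L :=
          mul_le_mul_right (lintegral_mono_set (Set.Ioo_subset_Ioo le_rfl hs.2.le)) _
        refine ⟨hs.1, ?_⟩
        by_contra hts
        push_neg at hts
        have hmono : I t ≤ I s := mono ht hs hts
        have : (ENNReal.ofReal (I s))⁻¹ * L ≤ L * (ENNReal.ofReal (I t))⁻¹ := by
          rw [mul_comm]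
          exact mul_le_mul_right (ENNReal.inv_le_inv.mpr (ENNReal.ofReal_le_ofReal hmono)) _
        exact absurd ((hlt.trans_le hle).trans_le this) (lt_irrefl _)
      calc volume {s ∈ Set.Ioo (0:ℝ) 1 | L * (ENNReal.ofReal (I t))⁻¹ < RI I f s}
          ≤ volume (Set.Ioo (0:ℝ) t) := measure_mono hsub
        _ = ENNReal.ofReal t := by rw [Real.volume_Ioo, sub_zero]
    calc ENNReal.ofReal (I t) * rearr (RI I f) t
        ≤ ENNReal.ofReal (I t) * (L * (ENNReal.ofReal (I t))⁻¹) := mul_le_mul_right hre _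
      _ = L * (ENNReal.ofReal (I t) * (ENNReal.ofReal (I t))⁻¹) := by ring
      _ = L := by rw [ENNReal.mul_inv_cancel hIt0 ENNReal.ofReal_ne_top, mul_one]
end
end
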